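/- Let N ≥ 2 be an integer, let λ > 0, γ > 0, ρ > 0 be reals, and let a, d be real numbers. Define b̄ = (−aN + a + 2d)/(λ − λN²) and c̄ = −(d − aN)/(λ + λN). Then c̄ − (N−1)b̄ = (a + d)/(λ(N+1)). Moreover, if δ is a real with 0 < δ < √2·N·√((N−1)/(3N+1)) and for λ > 0 one sets d(λ) = √(γλ)·δ, R(λ) = ρ² + (8γN² − 4d(λ)ρ(3N+1))/(λ(N+1)²) − 4d(λ)²(3N+1)/(λ²(N−1)(N+1)²), a(λ) = (d(λ)(6N+2) − λ(N+1)²(ρ − √(R(λ))))/(4N²), and defines b̄(λ), c̄(λ) by the above formulas with a = a(λ), d = d(λ), then lim_{λ→0⁺} √(λ/γ)·(c̄(λ) − (N−1)b̄(λ)) = Δ(N,δ); in particular c̄(λ) − (N−1)b̄(λ) > 0 for all sufficiently small λ > 0. -/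

import Mathlib

open Filter

/-- `d(λ) = √(γλ)·δ`. -/
noncomputable def dCoef (γ δ lam : ℝ) : ℝ := Real.sqrt (γ * lam) * δ

/-- The discriminant `R(λ)` appearing in the explicit formula for `a(λ)`. -/
noncomputable def RCoef (N : ℕ) (γ ρ δ lam : ℝ) : ℝ :=
  ρ ^ 2 + (8 * γ * (N : ℝ) ^ 2 - 4 * dCoef γ δ lam * ρ * (3 * (N : ℝ) + 1))
      / (lam * ((N : ℝ) + 1) ^ 2)
    - 4 * (dCoef γ δ lam) ^ 2 * (3 * (N : ℝ) + 1)
      / (lam ^ 2 * ((N : ℝ) - 1) * ((N : ℝ) + 1) ^ 2)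

/-- The coefficient `a(λ)`. -/
noncomputable def aCoef (N : ℕ) (γ ρ δ lam : ℝ) : ℝ :=
  (dCoef γ δ lam * (6 * (N : ℝ) + 2)
      - lam * ((N : ℝ) + 1) ^ 2 * (ρ - Real.sqrt (RCoef N γ ρ δ lam)))
    / (4 * (N : ℝ) ^ 2)

/-- `b̄` as a function of `a`, `d`. -/
noncomputable def bbarOf (N : ℕ) (lam a d : ℝ) : ℝ :=
  (-(a * (N : ℝ)) + a + 2 * d) / (lam - lam * (N : ℝ) ^ 2)

/-- `c̄` as a function of `a`, `d`. -/
noncomputable def cbarOf (N : ℕ) (lam a d : ℝ) : ℝ :=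
  -(d - a * (N : ℝ)) / (lam + lam * (N : ℝ))

/-- `D̄(N,y) = √((2N³ − 2N² − (3N+1)y²)/((N−1)(N+1)²))`. -/
noncomputable def Dbar (N : ℕ) (y : ℝ) : ℝ :=
  Real.sqrt ((2 * (N : ℝ) ^ 3 - 2 * (N : ℝ) ^ 2 - (3 * (N : ℝ) + 1) * y ^ 2)
    / (((N : ℝ) - 1) * ((N : ℝ) + 1) ^ 2))

/-- `Δ(N,y) = ((N+1)·D̄(N,y) + (2N+1)y)/(2N²)`. -/
noncomputable def DeltaFn (N : ℕ) (y : ℝ) : ℝ :=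
  (((N : ℝ) + 1) * Dbar N y + (2 * (N : ℝ) + 1) * y) / (2 * (N : ℝ) ^ 2)

/-- auxiliary: `(l/γ)·R(l)`, written as a function continuous at `0`. -/
noncomputable def Gaux (N : ℕ) (γ ρ δ : ℝ) (l : ℝ) : ℝ :=
  (ρ ^ 2 / γ) * l
    - (4 * δ * ρ * (3 * (N : ℝ) + 1) / (((N : ℝ) + 1) ^ 2)) * Real.sqrt (l / γ)
    + (8 * (N : ℝ) ^ 2 / (((N : ℝ) + 1) ^ 2)
        - 4 * δ ^ 2 * (3 * (N : ℝ) + 1) / (((N : ℝ) - 1) * ((N : ℝ) + 1) ^ 2))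

/-- auxiliary: the continuous representative of the rescaled trading speed. -/
noncomputable def Taux (N : ℕ) (γ ρ δ : ℝ) (l : ℝ) : ℝ :=
  (2 * (N : ℝ) + 1) * δ / (2 * (N : ℝ) ^ 2)
    + ((N : ℝ) + 1) / (4 * (N : ℝ) ^ 2)
      * (Real.sqrt (Gaux N γ ρ δ l) - Real.sqrt (l / γ) * ρ)

lemma Taux_continuous (N : ℕ) (γ ρ δ : ℝ) : Continuous (Taux N γ ρ δ) := by
  have hs : Continuous (fun l : ℝ => Real.sqrt (l / γ)) :=
    Real.continuous_sqrt.comp (continuous_id.div_const γ)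
  have hG : Continuous (Gaux N γ ρ δ) := by
    unfold Gaux
    exact ((continuous_const.mul continuous_id).sub (continuous_const.mul hs)).add
      continuous_const
  unfold Taux
  exact continuous_const.add (continuous_const.mul
    ((Real.continuous_sqrt.comp hG).sub (hs.mul continuous_const)))

/-- The identity `c̄ − (N−1)b̄ = (a + d)/(λ(N+1))`, the limit
`√(λ/γ)·(c̄(λ) − (N−1)b̄(λ)) → Δ(N,δ)` as `λ → 0⁺`, and the eventual positivity of
`c̄(λ) − (N−1)b̄(λ)` for small `λ > 0`. -/
theorem trading_speed_identity_and_asymptotics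
    (N : ℕ) (hN : 2 ≤ N) (lam γ ρ : ℝ) (hlam : 0 < lam) (hγ : 0 < γ) (hρ : 0 < ρ)
    (a d : ℝ) (δ : ℝ) (hδ0 : 0 < δ)
    (hδ : δ < Real.sqrt 2 * (N : ℝ) * Real.sqrt (((N : ℝ) - 1) / (3 * (N : ℝ) + 1))) :
    (cbarOf N lam a d - ((N : ℝ) - 1) * bbarOf N lam a d
        = (a + d) / (lam * ((N : ℝ) + 1))) ∧
    Tendsto (fun l : ℝ => Real.sqrt (l / γ) *
        (cbarOf N l (aCoef N γ ρ δ l) (dCoef γ δ l)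
          - ((N : ℝ) - 1) * bbarOf N l (aCoef N γ ρ δ l) (dCoef γ δ l)))
      (nhdsWithin (0 : ℝ) (Set.Ioi 0)) (nhds (DeltaFn N δ)) ∧
    (∀ᶠ l in nhdsWithin (0 : ℝ) (Set.Ioi 0),
      0 < cbarOf N l (aCoef N γ ρ δ l) (dCoef γ δ l)
          - ((N : ℝ) - 1) * bbarOf N l (aCoef N γ ρ δ l) (dCoef γ δ l)) := by
  have hn2 : (2:ℝ) ≤ (N:ℝ) := by exact_mod_cast hN
  set n : ℝ := (N:ℝ) with hn
  have hn0 : n ≠ 0 := by nlinarith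
  have hn1 : n + 1 ≠ 0 := by nlinarith
  have hnm1 : n - 1 ≠ 0 := by nlinarith
  -- Part 1: the general identity
  have key : ∀ l A D : ℝ, 0 < l →
      cbarOf N l A D - (n - 1) * bbarOf N l A D = (A + D) / (l * (n + 1)) := by
    intro l A D hl
    unfold cbarOf bbarOf
    rw [← hn]
    have h1 : l - l * n ^ 2 ≠ 0 := by
      have : l - l * n ^ 2 < 0 := by
        nlinarith [mul_pos hl (show (0:ℝ) < n ^ 2 - 1 by nlinarith)]
      exact this.ne
    have h2 : l + l * n ≠ 0 := by
      have : 0 < l + l * n := by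
        nlinarith [mul_pos hl (show (0:ℝ) < n by nlinarith)]
      exact this.ne'
    have h3 : (1:ℝ) - n ^ 2 ≠ 0 := (show (1:ℝ) - n ^ 2 < 0 by nlinarith).ne
    field_simp
    ring
  -- value of Taux at 0
  have hT0 : Taux N γ ρ δ 0 = DeltaFn N δ := by
    have hG0 : Gaux N γ ρ δ 0 = 4 * ((2 * n ^ 3 - 2 * n ^ 2 - (3 * n + 1) * δ ^ 2)
        / ((n - 1) * (n + 1) ^ 2)) := by
      unfold Gaux
      rw [← hn, zero_div, Real.sqrt_zero]
      field_simp
      ring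
    have h4 : Real.sqrt (4 * ((2 * n ^ 3 - 2 * n ^ 2 - (3 * n + 1) * δ ^ 2)
        / ((n - 1) * (n + 1) ^ 2))) = 2 * Dbar N δ := by
      rw [Real.sqrt_mul (by norm_num : (0:ℝ) ≤ 4)]
      rw [show (4:ℝ) = 2 ^ 2 by norm_num, Real.sqrt_sq (by norm_num : (0:ℝ) ≤ 2)]
      rw [Dbar, ← hn]
    unfold Taux
    rw [hG0, h4, zero_div, Real.sqrt_zero, DeltaFn, ← hn]
    field_simp
    ring
  -- the limit of Taux
  have hTlim : Tendsto (Taux N γ ρ δ) (nhdsWithin (0:ℝ) (Set.Ioi 0))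
      (nhds (DeltaFn N δ)) := by
    have := ((Taux_continuous N γ ρ δ).continuousAt (x := 0)).tendsto
    rw [hT0] at this
    exact this.mono_left nhdsWithin_le_nhds
  -- eventual equality on (0,∞)
  have heq : ∀ᶠ l in nhdsWithin (0:ℝ) (Set.Ioi 0),
      Real.sqrt (l / γ) *
        (cbarOf N l (aCoef N γ ρ δ l) (dCoef γ δ l)
          - (n - 1) * bbarOf N l (aCoef N γ ρ δ l) (dCoef γ δ l)) = Taux N γ ρ δ l := by
    filter_upwards [self_mem_nhdsWithin] with l hl
    have hl : (0:ℝ) < l := hl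
    rw [key l _ _ hl]
    set u : ℝ := Real.sqrt (l / γ) with hud
    have hu0 : 0 < u := Real.sqrt_pos.mpr (by positivity)
    have hu2 : u ^ 2 = l / γ := Real.sq_sqrt (by positivity)
    have hlgu : l = γ * u ^ 2 := by rw [hu2]; field_simp
    have hv : Real.sqrt (γ * l) = γ * u := by
      rw [show γ * l = γ ^ 2 * (l / γ) by field_simp]
      rw [Real.sqrt_mul (sq_nonneg γ), Real.sqrt_sq hγ.le, hud]
    set r : ℝ := Real.sqrt (RCoef N γ ρ δ l) with hrd
    have hGR : Gaux N γ ρ δ l = (l / γ) * RCoef N γ ρ δ l := by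
      unfold Gaux RCoef dCoef
      rw [hv, ← hn, ← hud]
      rw [hlgu]
      have hu0' : u ≠ 0 := hu0.ne'
      field_simp
      ring
    have hg : Real.sqrt (Gaux N γ ρ δ l) = u * r := by
      rw [hGR, Real.sqrt_mul (by positivity), hud, hrd]
    unfold Taux
    rw [hg]
    unfold aCoef dCoef
    rw [hv, ← hrd, ← hn, ← hud]
    rw [hlgu]
    have hu0' : u ≠ 0 := hu0.ne'
    field_simp
    ring
  have hTend : Tendsto (fun l : ℝ => Real.sqrt (l / γ) *
      (cbarOf N l (aCoef N γ ρ δ l) (dCoef γ δ l)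
        - (n - 1) * bbarOf N l (aCoef N γ ρ δ l) (dCoef γ δ l)))
      (nhdsWithin (0:ℝ) (Set.Ioi 0)) (nhds (DeltaFn N δ)) :=
    hTlim.congr' (heq.mono fun l h => h.symm)
  refine ⟨key lam a d hlam, hTend, ?_⟩
  -- positivity: DeltaFn N δ > 0
  have hΔ : 0 < DeltaFn N δ := by
    unfold DeltaFn
    rw [← hn]
    have hD : 0 ≤ Dbar N δ := Real.sqrt_nonneg _
    apply div_pos
    · nlinarith [mul_nonneg (show (0:ℝ) ≤ n + 1 by nlinarith) hD]
    · nlinarith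
  have hpos : ∀ᶠ l in nhdsWithin (0:ℝ) (Set.Ioi 0),
      0 < Real.sqrt (l / γ) *
        (cbarOf N l (aCoef N γ ρ δ l) (dCoef γ δ l)
          - (n - 1) * bbarOf N l (aCoef N γ ρ δ l) (dCoef γ δ l)) :=
    hTend.eventually (eventually_gt_nhds hΔ)
  filter_upwards [hpos, self_mem_nhdsWithin] with l hl hl0
  have hl0 : (0:ℝ) < l := hl0
  have hs : 0 < Real.sqrt (l / γ) := Real.sqrt_pos.mpr (by positivity)
  nlinarith [hl, hs]
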